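/- arXiv:1609.06269 — 5 statements merged into one kernel-verified Lean document; each statement's English description precedes it below -/
import Mathlib

section
/- A conditional probability distribution P(r,s|a,b) that is a convex combination of products P^A(r|a,x)P^B(s|b,x) weighted by P^S(x) can be written as a convex combination of deterministic local distributions, i.e., there exists a probability distribution P^{AB} on pairs of sequences (r_1,...,r_A, s_1,...,s_B) such that P(r,s|a,b) = Σ_{(𝐫,𝐬): r_a=r, s_b=s} P^{AB}(𝐫,𝐬) (Fine's theorem). -/
open Finset

private lemma fine_aux_total {n : ℕ} {R : Type*} [Fintype R] [DecidableEq R]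
    (Q : Fin n → R → ℝ) (hQ : ∀ a, ∑ r, Q a r = 1) :
    ∑ f : Fin n → R, ∏ a, Q a (f a) = 1 := by
  have := Finset.prod_univ_sum (fun _ : Fin n => (Finset.univ : Finset R)) (fun a r => Q a r)
  rw [Fintype.piFinset_univ] at this
  rw [← this]
  simp [hQ]

private lemma fine_aux_cond {n : ℕ} {R : Type*} [Fintype R] [DecidableEq R]
    (Q : Fin n → R → ℝ) (hQ : ∀ a, ∑ r, Q a r = 1) (a : Fin n) (r : R) :
    ∑ f : Fin n → R, (if f a = r then ∏ a', Q a' (f a') else 0) = Q a r := by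
  set Q' : Fin n → R → ℝ := fun a' r' =>
    if a' = a then (if r' = r then Q a r else 0) else Q a' r' with hQ'
  have key : ∀ f : Fin n → R,
      (if f a = r then ∏ a', Q a' (f a') else 0) = ∏ a', Q' a' (f a') := by
    intro f
    by_cases h : f a = r
    · simp only [h, if_pos]
      refine Finset.prod_congr rfl fun a' _ => ?_
      simp only [hQ']
      by_cases ha : a' = a
      · subst ha; simp [h]
      · simp [ha]
    · simp only [h, if_neg, if_false]
      symm
      apply Finset.prod_eq_zero (Finset.mem_univ a)
      simp [hQ', h]
  rw [Finset.sum_congr rfl fun f _ => key f]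
  have := Finset.prod_univ_sum (fun _ : Fin n => (Finset.univ : Finset R)) (fun a' r' => Q' a' r')
  rw [Fintype.piFinset_univ] at this
  rw [← this]
  have hrow : ∀ a', ∑ r', Q' a' r' = if a' = a then Q a r else 1 := by
    intro a'
    by_cases ha : a' = a
    · simp [hQ', ha]
    · simp [hQ', ha, hQ a']
  rw [Finset.prod_congr rfl fun a' _ => hrow a']
  simp

/-- **Fine's theorem** (convex-combination form): if `P(r,s|a,b)` is a convex
combination of products `P^A(r|a,x) P^B(s|b,x)` weighted by `P^S(x)`, then it
can be written as a convex combination of deterministic local distributions. -/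
theorem fine_theorem {A B : ℕ} {R S X : Type*} [Fintype R] [Fintype S] [Fintype X]
    [DecidableEq R] [DecidableEq S]
    (P : R → S → Fin A → Fin B → ℝ)
    (PA : R → Fin A → X → ℝ) (PB : S → Fin B → X → ℝ) (PS : X → ℝ)
    (hPA_nonneg : ∀ r a x, 0 ≤ PA r a x) (hPA_sum : ∀ a x, ∑ r, PA r a x = 1)
    (hPB_nonneg : ∀ s b x, 0 ≤ PB s b x) (hPB_sum : ∀ b x, ∑ s, PB s b x = 1)
    (hPS_nonneg : ∀ x, 0 ≤ PS x) (hPS_sum : ∑ x, PS x = 1)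
    (hP : ∀ r s a b, P r s a b = ∑ x, PA r a x * PB s b x * PS x) :
    ∃ PAB : ((Fin A → R) × (Fin B → S)) → ℝ,
      (∀ p, 0 ≤ PAB p) ∧ (∑ p, PAB p = 1) ∧
      (∀ r s a b, P r s a b =
        ∑ p : (Fin A → R) × (Fin B → S),
          (if p.1 a = r ∧ p.2 b = s then PAB p else 0)) := by
  refine ⟨fun p => ∑ x, PS x * (∏ a, PA (p.1 a) a x) * (∏ b, PB (p.2 b) b x), ?_, ?_, ?_⟩
  · intro p
    apply Finset.sum_nonneg
    intro x _
    exact mul_nonneg (mul_nonneg (hPS_nonneg x)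
      (Finset.prod_nonneg fun a _ => hPA_nonneg _ a x))
      (Finset.prod_nonneg fun b _ => hPB_nonneg _ b x)
  · rw [Finset.sum_comm]
    rw [← hPS_sum]
    refine Finset.sum_congr rfl fun x _ => ?_
    rw [Fintype.sum_prod_type]
    simp only [← Finset.mul_sum, ← Finset.sum_mul]
    rw [fine_aux_total _ (fun a => hPA_sum a x),
      fine_aux_total _ (fun b => hPB_sum b x)]
    ring
  · intro r s a b
    rw [hP]
    have key : ∀ (f : Fin A → R) (g : Fin B → S),
        (if f a = r ∧ g b = s then
          ∑ x, PS x * (∏ a, PA (f a) a x) * (∏ b, PB (g b) b x) else 0)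
        = ∑ x, PS x * ((if f a = r then ∏ a, PA (f a) a x else 0)
            * (if g b = s then ∏ b, PB (g b) b x else 0)) := by
      intro f g
      by_cases h1 : f a = r <;> by_cases h2 : g b = s <;>
        simp [h1, h2, mul_assoc]
    simp only [key]
    rw [Finset.sum_comm]
    refine Finset.sum_congr rfl fun x _ => ?_
    rw [Fintype.sum_prod_type]
    simp only [← Finset.mul_sum, ← Finset.sum_mul]
    rw [fine_aux_cond _ (fun a => hPA_sum a x),
      fine_aux_cond _ (fun b => hPB_sum b x)]
    ring
end

section
/- Let χ_n ≥ 0 with value F_n = F[χ_n], let (𝐫',𝐬') be any sequence pair, and set α = Σ_{a,b} W(a,b)[P(r'_a,s'_b|a,b) − ρ_{χ_n}(r'_a,s'_b|a,b)]. Then F[χ_n + α·δ_{(𝐫',𝐬')}] = F_n − α²/2, where δ_{(𝐫',𝐬')} is the indicator of the single point (𝐫',𝐬'). Consequently, if α > 0, the minimum of F over nonnegative χ supported on supp(χ_n) ∪ {(𝐫',𝐬')} is at most F_n − α²/2. -/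
open Finset

/-- The (unnormalized) local distribution `ρ_χ(r,s|a,b)` associated with `χ`. -/
noncomputable def locDist {A B : ℕ} {R S : Type*} [Fintype R] [Fintype S]
    [DecidableEq R] [DecidableEq S]
    (χ : ((Fin A → R) × (Fin B → S)) → ℝ) (r : R) (s : S) (a : Fin A) (b : Fin B) : ℝ :=
  ∑ p : (Fin A → R) × (Fin B → S), (if p.1 a = r ∧ p.2 b = s then χ p else 0)

/-- The objective functional `F[χ] = (1/2) Σ (P-ρ_χ)² W`. -/
noncomputable def objF {A B : ℕ} {R S : Type*} [Fintype R] [Fintype S]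
    [DecidableEq R] [DecidableEq S]
    (P : R → S → Fin A → Fin B → ℝ) (W : Fin A → Fin B → ℝ)
    (χ : ((Fin A → R) × (Fin B → S)) → ℝ) : ℝ :=
  (1/2) * ∑ r, ∑ s, ∑ a, ∑ b, (P r s a b - locDist χ r s a b)^2 * W a b

lemma sum4_comm {R S : Type*} [Fintype R] [Fintype S] {A B : ℕ}
    (f : R → S → Fin A → Fin B → ℝ) :
    (∑ r, ∑ s, ∑ a, ∑ b, f r s a b) = ∑ a, ∑ b, ∑ r, ∑ s, f r s a b :=
  calc (∑ r, ∑ s, ∑ a, ∑ b, f r s a b)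
      = ∑ r, ∑ a, ∑ s, ∑ b, f r s a b :=
        Finset.sum_congr rfl fun r _ => Finset.sum_comm
    _ = ∑ a, ∑ r, ∑ s, ∑ b, f r s a b := Finset.sum_comm
    _ = ∑ a, ∑ r, ∑ b, ∑ s, f r s a b :=
        Finset.sum_congr rfl fun a _ => Finset.sum_congr rfl fun r _ => Finset.sum_comm
    _ = ∑ a, ∑ b, ∑ r, ∑ s, f r s a b :=
        Finset.sum_congr rfl fun a _ => Finset.sum_comm

lemma sum_pair {R S : Type*} [Fintype R] [Fintype S] [DecidableEq R] [DecidableEq S]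
    (r0 : R) (s0 : S) (g : R → S → ℝ) :
    (∑ r, ∑ s, if r0 = r ∧ s0 = s then g r s else 0) = g r0 s0 := by
  have h : ∀ r, (∑ s, if r0 = r ∧ s0 = s then g r s else 0)
      = if r0 = r then g r s0 else 0 := by
    intro r; by_cases h : r0 = r
    · simp [h, Finset.sum_ite_eq]
    · simp [h]
  rw [Finset.sum_congr rfl fun r _ => h r]
  simp [Finset.sum_ite_eq]

/-- Adding weight `α` on a single vertex `(𝐫',𝐬')`, where `α` is the value of the
oracle functional there, decreases `F` by exactly `α²/2`; consequently, if
`α > 0` the minimum over nonnegative `χ` supported on `supp χₙ ∪ {(𝐫',𝐬')}`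
is at most `Fₙ - α²/2`. -/
theorem add_vertex_decrease {A B : ℕ} {R S : Type*}
    [Fintype R] [Fintype S] [DecidableEq R] [DecidableEq S]
    (P : R → S → Fin A → Fin B → ℝ) (W : Fin A → Fin B → ℝ)
    (hW_nonneg : ∀ a b, 0 ≤ W a b) (hW_sum : ∑ a, ∑ b, W a b = 1)
    (χn : ((Fin A → R) × (Fin B → S)) → ℝ)
    (hχ_nonneg : ∀ p, 0 ≤ χn p)
    (p' : (Fin A → R) × (Fin B → S))
    (α : ℝ)
    (hα : α = ∑ a, ∑ b, W a b *
      (P (p'.1 a) (p'.2 b) a b - locDist χn (p'.1 a) (p'.2 b) a b)) :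
    objF P W (fun p => χn p + if p = p' then α else 0)
      = objF P W χn - α ^ 2 / 2
    ∧ (0 < α → ∃ χ' : ((Fin A → R) × (Fin B → S)) → ℝ,
        (∀ p, 0 ≤ χ' p) ∧
        (∀ p, χ' p ≠ 0 → χn p ≠ 0 ∨ p = p') ∧
        objF P W χ' ≤ objF P W χn - α ^ 2 / 2) := by
  set χ' : ((Fin A → R) × (Fin B → S)) → ℝ := fun p => χn p + if p = p' then α else 0 with hχ'
  have hloc : ∀ (r : R) (s : S) (a : Fin A) (b : Fin B),
      locDist χ' r s a b = locDist χn r s a b + (if p'.1 a = r ∧ p'.2 b = s then α else 0) := by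
    intro r s a b
    unfold locDist
    have h : ∀ p : (Fin A → R) × (Fin B → S),
        (if p.1 a = r ∧ p.2 b = s then χ' p else 0)
          = (if p.1 a = r ∧ p.2 b = s then χn p else 0)
            + (if p = p' then (if p.1 a = r ∧ p.2 b = s then α else 0) else 0) := by
      intro p
      by_cases h2 : p = p'
      · subst h2; by_cases h1 : p.1 a = r ∧ p.2 b = s <;> simp [χ', h1]
      · simp [χ', h2]
    rw [Finset.sum_congr rfl fun p _ => h p, Finset.sum_add_distrib,
      Finset.sum_ite_eq' Finset.univ p']
    simp
  have expand : ∀ (r : R) (s : S) (a : Fin A) (b : Fin B),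
      (P r s a b - locDist χ' r s a b)^2 * W a b
        = (P r s a b - locDist χn r s a b)^2 * W a b
          - 2*α*((if p'.1 a = r ∧ p'.2 b = s then (P r s a b - locDist χn r s a b) * W a b else 0))
          + α^2 * ((if p'.1 a = r ∧ p'.2 b = s then W a b else 0)) := by
    intro r s a b
    rw [hloc]
    by_cases h : p'.1 a = r ∧ p'.2 b = s <;> simp [h] <;> ring
  have hS1 : (∑ r, ∑ s, ∑ a, ∑ b,
      (if p'.1 a = r ∧ p'.2 b = s then (P r s a b - locDist χn r s a b) * W a b else 0)) = α := by
    rw [sum4_comm]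
    rw [Finset.sum_congr rfl fun a _ => Finset.sum_congr rfl fun b _ =>
      sum_pair (p'.1 a) (p'.2 b) (fun r s => (P r s a b - locDist χn r s a b) * W a b)]
    rw [hα]
    exact Finset.sum_congr rfl fun a _ => Finset.sum_congr rfl fun b _ => (mul_comm _ _)
  have hS2 : (∑ r, ∑ s, ∑ a, ∑ b,
      (if p'.1 a = r ∧ p'.2 b = s then W a b else 0)) = 1 := by
    rw [sum4_comm]
    rw [Finset.sum_congr rfl fun a _ => Finset.sum_congr rfl fun b _ =>
      sum_pair (p'.1 a) (p'.2 b) (fun _ _ => W a b)]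
    exact hW_sum
  have hmain : objF P W χ' = objF P W χn - α ^ 2 / 2 := by
    unfold objF
    rw [Finset.sum_congr rfl fun r _ => Finset.sum_congr rfl fun s _ =>
      Finset.sum_congr rfl fun a _ => Finset.sum_congr rfl fun b _ => expand r s a b]
    simp only [Finset.sum_add_distrib, Finset.sum_sub_distrib, ← Finset.mul_sum]
    rw [hS1, hS2]
    ring
  refine ⟨hmain, fun hαpos => ⟨χ', fun p => ?_, fun p hp => ?_, le_of_eq hmain⟩⟩
  · by_cases h : p = p'
    · simp only [χ', h, if_pos rfl]
      exact add_nonneg (hχ_nonneg p') hαpos.le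
    · simp only [χ', if_neg h, add_zero]
      exact hχ_nonneg p
  · by_cases h : p = p'
    · exact Or.inr h
    · left; simpa [χ', h] using hp
end

section
/- For any real function η(r,s,a,b) satisfying Σ_{a,b} W(a,b) η(r_a,s_b,a,b) ≤ 0 for all sequence pairs (𝐫,𝐬), the dual value F_dual[η] = Σ_{r,s,a,b} W(a,b) η(r,s,a,b)[P(r,s|a,b) − η(r,s,a,b)/2] is a lower bound on the primal optimal value F^{min} = min_{χ ≥ 0} F[χ] (weak duality). -/
open Finset

/-- Swapping a fivefold iterated sum: the innermost index moves to the
outside and the pairs `(r,s)` and `(a,b)` exchange places. -/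
lemma sum_swap_five {A B : ℕ} {R S : Type*} [Fintype R] [Fintype S]
    [DecidableEq R] [DecidableEq S]
    (c : R → S → Fin A → Fin B → ((Fin A → R) × (Fin B → S)) → ℝ) :
    ∑ r, ∑ s, ∑ a, ∑ b, ∑ p : (Fin A → R) × (Fin B → S), c r s a b p
    = ∑ p : (Fin A → R) × (Fin B → S), ∑ a, ∑ b, ∑ r, ∑ s, c r s a b p := by
  have e1 : ∀ r s a, ∑ b, ∑ p : (Fin A → R) × (Fin B → S), c r s a b p
      = ∑ p : (Fin A → R) × (Fin B → S), ∑ b, c r s a b p := fun _ _ _ => Finset.sum_comm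
  simp only [e1]
  have e2 : ∀ r s, ∑ a, ∑ p : (Fin A → R) × (Fin B → S), ∑ b, c r s a b p
      = ∑ p : (Fin A → R) × (Fin B → S), ∑ a, ∑ b, c r s a b p := fun _ _ => Finset.sum_comm
  simp only [e2]
  have e3 : ∀ r, ∑ s, ∑ p : (Fin A → R) × (Fin B → S), ∑ a, ∑ b, c r s a b p
      = ∑ p : (Fin A → R) × (Fin B → S), ∑ s, ∑ a, ∑ b, c r s a b p := fun _ => Finset.sum_comm
  simp only [e3]
  rw [Finset.sum_comm]
  refine Finset.sum_congr rfl fun p _ => ?_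
  have e4 : ∀ r a, ∑ s, ∑ b, c r s a b p = ∑ b, ∑ s, c r s a b p := fun _ _ => Finset.sum_comm
  have e5 : ∀ r, ∑ s, ∑ a, ∑ b, c r s a b p = ∑ a, ∑ s, ∑ b, c r s a b p :=
    fun _ => Finset.sum_comm
  simp only [e5, e4]
  rw [Finset.sum_comm]
  exact Finset.sum_congr rfl fun a _ => Finset.sum_comm

/-- **Weak duality**: for any dual-feasible `η`, the dual objective
`F_dual[η] = Σ W η (P - η/2)` is a lower bound on `F[χ]` for every
nonnegative `χ`, hence on the primal optimal value. -/
theorem weak_duality {A B : ℕ} {R S : Type*}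
    [Fintype R] [Fintype S] [DecidableEq R] [DecidableEq S]
    (P : R → S → Fin A → Fin B → ℝ) (W : Fin A → Fin B → ℝ)
    (hW : ∀ a b, 0 < W a b) (hW_sum : ∑ a, ∑ b, W a b = 1)
    (η : R → S → Fin A → Fin B → ℝ)
    (h_feas : ∀ p : (Fin A → R) × (Fin B → S),
      ∑ a, ∑ b, W a b * η (p.1 a) (p.2 b) a b ≤ 0) :
    ∀ χ : ((Fin A → R) × (Fin B → S)) → ℝ, (∀ p, 0 ≤ χ p) →
      ∑ r, ∑ s, ∑ a, ∑ b,
        W a b * η r s a b * (P r s a b - η r s a b / 2)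
      ≤ objF P W χ := by
  intro χ hχ
  have key : objF P W χ =
      (∑ r, ∑ s, ∑ a, ∑ b, W a b * η r s a b * (P r s a b - η r s a b / 2))
      + (∑ r, ∑ s, ∑ a, ∑ b,
          W a b * (P r s a b - locDist χ r s a b - η r s a b)^2 / 2)
      - (∑ r, ∑ s, ∑ a, ∑ b, W a b * η r s a b * locDist χ r s a b) := by
    unfold objF
    rw [Finset.mul_sum]
    simp only [← Finset.sum_add_distrib, ← Finset.sum_sub_distrib, Finset.mul_sum]
    refine Finset.sum_congr rfl fun r _ => Finset.sum_congr rfl fun s _ =>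
      Finset.sum_congr rfl fun a _ => Finset.sum_congr rfl fun b _ => ?_
    ring
  have hT1 : 0 ≤ ∑ r, ∑ s, ∑ a, ∑ b,
      W a b * (P r s a b - locDist χ r s a b - η r s a b)^2 / 2 := by
    refine Finset.sum_nonneg fun r _ => Finset.sum_nonneg fun s _ =>
      Finset.sum_nonneg fun a _ => Finset.sum_nonneg fun b _ => ?_
    have := (hW a b).le
    positivity
  have hT2 : ∑ r, ∑ s, ∑ a, ∑ b, W a b * η r s a b * locDist χ r s a b ≤ 0 := by
    have h : ∑ r, ∑ s, ∑ a, ∑ b, W a b * η r s a b * locDist χ r s a b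
        = ∑ p : (Fin A → R) × (Fin B → S),
            χ p * ∑ a, ∑ b, W a b * η (p.1 a) (p.2 b) a b := by
      unfold locDist
      simp only [Finset.mul_sum, mul_ite, mul_zero]
      rw [sum_swap_five (fun r s a b p =>
        if p.1 a = r ∧ p.2 b = s then W a b * η r s a b * χ p else 0)]
      refine Finset.sum_congr rfl fun p _ => ?_
      simp only [ite_and, Finset.sum_ite_eq, Finset.mem_univ, if_true, Finset.sum_ite_irrel,
        Finset.sum_const_zero]
      refine Finset.sum_congr rfl fun a _ => Finset.sum_congr rfl fun b _ => ?_
      ring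
    rw [h]
    exact Finset.sum_nonpos fun p _ =>
      mul_nonpos_of_nonneg_of_nonpos (hχ p) (h_feas p)
  linarith
end

section
/- Let ρ be any unnormalized local distribution (ρ = ρ_χ for some χ ≥ 0), and let α = max_{𝐫,𝐬} Σ_{a,b} W(a,b)[P(r_a,s_b|a,b) − ρ(r_a,s_b|a,b)]. Then F^{min} ≥ (1/2)Σ_{r,s,a,b} W(a,b)[P²(r,s|a,b) − (ρ(r,s|a,b)+α)²]. -/
open Finset

lemma swap5 {A B : ℕ} {R S PP : Type*} [Fintype R] [Fintype S] [Fintype PP]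
    (g : R → S → Fin A → Fin B → PP → ℝ) :
    ∑ r, ∑ s, ∑ a, ∑ b, ∑ p, g r s a b p = ∑ p, ∑ r, ∑ s, ∑ a, ∑ b, g r s a b p := by
  have h := Finset.sum_comm (s := (Finset.univ : Finset (R × S × Fin A × Fin B)))
    (t := (Finset.univ : Finset PP)) (f := fun x p => g x.1 x.2.1 x.2.2.1 x.2.2.2 p)
  simpa [Fintype.sum_prod_type] using h

lemma sum_against_locDist {A B : ℕ} {R S : Type*} [Fintype R] [Fintype S]
    [DecidableEq R] [DecidableEq S]
    (f : R → S → Fin A → Fin B → ℝ) (χ' : ((Fin A → R) × (Fin B → S)) → ℝ) :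
    ∑ r, ∑ s, ∑ a, ∑ b, f r s a b * locDist χ' r s a b
      = ∑ p : (Fin A → R) × (Fin B → S), χ' p * ∑ a, ∑ b, f (p.1 a) (p.2 b) a b := by
  simp only [locDist, Finset.mul_sum]
  rw [swap5]
  refine Finset.sum_congr rfl fun p _ => ?_
  have h2 := Finset.sum_comm (s := (Finset.univ : Finset (R × S)))
    (t := (Finset.univ : Finset (Fin A × Fin B)))
    (f := fun x y => f x.1 x.2 y.1 y.2 * if p.1 y.1 = x.1 ∧ p.2 y.2 = x.2 then χ' p else 0)
  simp only [Fintype.sum_prod_type] at h2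
  rw [h2]
  refine Finset.sum_congr rfl fun a _ => ?_
  refine Finset.sum_congr rfl fun b _ => ?_
  simp [ite_and, Finset.sum_ite_eq, mul_comm]

/-- Dual lower bound induced by any unnormalized local distribution `ρ = ρ_χ`:
with `α` the maximal value returned by the oracle on `P - ρ`,
`F^{min} ≥ (1/2) Σ W (P² - (ρ+α)²)`. -/
theorem dual_lower_bound_from_local {A B : ℕ} {R S : Type*}
    [Fintype R] [Fintype S] [DecidableEq R] [DecidableEq S]
    [Nonempty R] [Nonempty S]
    (P : R → S → Fin A → Fin B → ℝ) (W : Fin A → Fin B → ℝ)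
    (hW : ∀ a b, 0 < W a b) (hW_sum : ∑ a, ∑ b, W a b = 1)
    (χ : ((Fin A → R) × (Fin B → S)) → ℝ) (hχ_nonneg : ∀ p, 0 ≤ χ p)
    (α : ℝ)
    (hα : α = Finset.univ.sup' Finset.univ_nonempty
      (fun p : (Fin A → R) × (Fin B → S) =>
        ∑ a, ∑ b, W a b *
          (P (p.1 a) (p.2 b) a b - locDist χ (p.1 a) (p.2 b) a b))) :
    ∀ χ' : ((Fin A → R) × (Fin B → S)) → ℝ, (∀ p, 0 ≤ χ' p) →
      (1/2) * ∑ r, ∑ s, ∑ a, ∑ b,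
        W a b * ((P r s a b) ^ 2 - (locDist χ r s a b + α) ^ 2)
      ≤ objF P W χ' := by
  intro χ' hχ'
  -- the cross term is nonpositive
  have hT : (∑ r, ∑ s, ∑ a, ∑ b,
      (W a b * (P r s a b - locDist χ r s a b - α)) * locDist χ' r s a b) ≤ 0 := by
    rw [sum_against_locDist (fun r s a b => W a b * (P r s a b - locDist χ r s a b - α)) χ']
    apply Finset.sum_nonpos
    intro p _
    apply mul_nonpos_of_nonneg_of_nonpos (hχ' p)
    have h1 : ∑ a, ∑ b, W a b * (P (p.1 a) (p.2 b) a b - locDist χ (p.1 a) (p.2 b) a b - α)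
        = (∑ a, ∑ b, W a b * (P (p.1 a) (p.2 b) a b - locDist χ (p.1 a) (p.2 b) a b))
          - α * ∑ a, ∑ b, W a b := by
      simp only [Finset.mul_sum, ← Finset.sum_sub_distrib]
      refine Finset.sum_congr rfl fun a _ => Finset.sum_congr rfl fun b _ => by ring
    have h2 : (∑ a, ∑ b, W a b * (P (p.1 a) (p.2 b) a b - locDist χ (p.1 a) (p.2 b) a b)) ≤ α := by
      rw [hα]
      exact Finset.le_sup' (fun p : (Fin A → R) × (Fin B → S) =>
        ∑ a, ∑ b, W a b *
          (P (p.1 a) (p.2 b) a b - locDist χ (p.1 a) (p.2 b) a b)) (Finset.mem_univ p)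
    rw [h1, hW_sum]
    linarith
  -- pointwise inequality
  have key : ∀ r s a b, W a b * ((P r s a b) ^ 2 - (locDist χ r s a b + α) ^ 2)
      ≤ (P r s a b - locDist χ' r s a b)^2 * W a b
        + 2 * ((W a b * (P r s a b - locDist χ r s a b - α)) * locDist χ' r s a b) := by
    intro r s a b
    nlinarith [mul_nonneg (hW a b).le
      (sq_nonneg (locDist χ r s a b + α - locDist χ' r s a b))]
  have hsum : (∑ r, ∑ s, ∑ a, ∑ b, W a b * ((P r s a b) ^ 2 - (locDist χ r s a b + α) ^ 2))
      ≤ ∑ r, ∑ s, ∑ a, ∑ b, ((P r s a b - locDist χ' r s a b)^2 * W a b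
        + 2 * ((W a b * (P r s a b - locDist χ r s a b - α)) * locDist χ' r s a b)) := by
    refine Finset.sum_le_sum fun r _ => Finset.sum_le_sum fun s _ =>
      Finset.sum_le_sum fun a _ => Finset.sum_le_sum fun b _ => key r s a b
  have hsplit : (∑ r, ∑ s, ∑ a, ∑ b, ((P r s a b - locDist χ' r s a b)^2 * W a b
        + 2 * ((W a b * (P r s a b - locDist χ r s a b - α)) * locDist χ' r s a b)))
      = (∑ r, ∑ s, ∑ a, ∑ b, (P r s a b - locDist χ' r s a b)^2 * W a b)
        + 2 * (∑ r, ∑ s, ∑ a, ∑ b,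
          (W a b * (P r s a b - locDist χ r s a b - α)) * locDist χ' r s a b) := by
    simp only [Finset.sum_add_distrib, Finset.mul_sum]
  rw [objF]
  rw [hsplit] at hsum
  linarith
end

section
/- Suppose a nonincreasing sequence of errors e_n = F_n − F^{min} ≥ 0 satisfies F_n^{min} − F_{n+1}^{min} ≥ 2(1−γ)(e_n / C)² for all n, where C = RS + 2 + 2√(RS), γ ∈ (0,1), and F_0^{min} − F_∞^{min} ≤ 1/2. Then for all n, e_n ≤ C / (2√((1−γ)(n+1))); in particular e_n → 0 at rate O(1/√n). -/
/-- Telescoping convergence argument: if the per-iteration decrease of the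
optimal values is at least `2(1-γ)(eₙ/C)²` with `C = RS + 2 + 2√(RS)`, the
errors `eₙ` are nonincreasing and nonnegative, and the total decrease is at
most `1/2`, then `eₙ ≤ C / (2√((1-γ)(n+1)))`. -/
theorem telescoping_convergence (R S : ℕ) (C : ℝ)
    (hC : C = (R * S : ℝ) + 2 + 2 * Real.sqrt (R * S))
    (γ : ℝ) (hγ : 0 < γ ∧ γ < 1)
    (Fnmin : ℕ → ℝ) (Fmin : ℝ) (Fseq : ℕ → ℝ)
    (e : ℕ → ℝ) (he : ∀ n, e n = Fseq n - Fmin)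
    (he_nonneg : ∀ n, 0 ≤ e n)
    (he_anti : ∀ n, e (n + 1) ≤ e n)
    (h_dec : ∀ n, Fnmin n - Fnmin (n + 1) ≥ 2 * (1 - γ) * (e n / C) ^ 2)
    (h_total : ∀ n, Fnmin 0 - Fnmin n ≤ 1 / 2) :
    ∀ n, e n ≤ C / (2 * Real.sqrt ((1 - γ) * (n + 1))) := by
  obtain ⟨hγ0, hγ1⟩ := hγ
  have hA : (0:ℝ) < 1 - γ := by linarith
  have hC0 : 0 < C := by
    rw [hC]
    have h1 : (0:ℝ) ≤ (R*S:ℝ) := by positivity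
    have h2 : (0:ℝ) ≤ Real.sqrt (R*S) := Real.sqrt_nonneg _
    linarith
  have hanti : Antitone e := antitone_nat_of_succ_le he_anti
  intro n
  have hsum : (n+1 : ℝ) * (2 * (1-γ) * (e n / C)^2) ≤ 1/2 := by
    have h1 : ∀ k ∈ Finset.range (n+1),
        2*(1-γ)*(e n / C)^2 ≤ Fnmin k - Fnmin (k+1) := by
      intro k hk
      have hk' : k ≤ n := Nat.lt_succ_iff.mp (Finset.mem_range.mp hk)
      have hek : e n ≤ e k := hanti hk'
      have hdiv : (e n / C)^2 ≤ (e k / C)^2 := by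
        apply pow_le_pow_left₀ (div_nonneg (he_nonneg n) hC0.le)
        exact div_le_div_of_nonneg_right hek hC0.le
      have := h_dec k
      nlinarith
    have h2 := Finset.sum_le_sum h1
    rw [Finset.sum_range_sub' (fun k => Fnmin k)] at h2
    rw [Finset.sum_const, Finset.card_range] at h2
    have h3 := h_total (n+1)
    have : ((n+1 : ℕ) : ℝ) * (2*(1-γ)*(e n / C)^2) ≤ 1/2 := by
      rw [← nsmul_eq_mul]
      exact le_trans h2 h3
    push_cast at this ⊢
    linarith
  set s := Real.sqrt ((1-γ)*(n+1)) with hs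
  have hs0 : 0 < s := Real.sqrt_pos.mpr (by positivity)
  have hs2 : s^2 = (1-γ)*(n+1) := Real.sq_sqrt (by positivity)
  rw [le_div_iff₀ (by positivity)]
  have hkey : 4 * ((1-γ)*(n+1)) * (e n)^2 ≤ C^2 := by
    have hC2 : (0:ℝ) < C^2 := by positivity
    have := hsum
    have hdivsq : (e n / C)^2 = (e n)^2 / C^2 := by ring
    rw [hdivsq] at this
    have h4 : (↑n + 1) * (2 * (1 - γ) * (e n ^ 2 / C ^ 2)) * C^2 ≤ 1/2 * C^2 :=
      mul_le_mul_of_nonneg_right this (le_of_lt hC2)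
    have h5 : (e n)^2 / C^2 * C^2 = (e n)^2 := div_mul_cancel₀ _ (ne_of_gt hC2)
    nlinarith
  nlinarith [sq_nonneg (e n * (2*s) - C), he_nonneg n, mul_pos hC0 hC0]
end
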